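/- For all 0 < p < q < ∞ there exist constants 0 < c ≤ C, depending only on p and q, such that for every finite family 𝓘 of dyadic intervals in ℝ and every family of complex numbers (a_I)_{I∈𝓘} one has c · ‖(a_I)‖_{BMO(p)} ≤ ‖(a_I)‖_{BMO(q)} ≤ C · ‖(a_I)‖_{BMO(p)}. -/

import Mathlib

open MeasureTheory Set

noncomputable section

attribute [local instance] Classical.propDecidable

/-- The dyadic interval [2^j k, 2^j (k+1)) encoded by the pair (j,k). -/
def dyadicSet (p : ℤ × ℤ) : Set ℝ :=
  Ico ((2:ℝ) ^ p.1 * p.2) ((2:ℝ) ^ p.1 * (p.2 + 1))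

/-- The length of the dyadic interval encoded by (j,k). -/
def dyadicLen (p : ℤ × ℤ) : ℝ := (2:ℝ) ^ p.1

/-- The phase-space BMO(r) norm of a family of complex numbers indexed by a finite family
of dyadic intervals:
`‖(a_I)‖_{BMO(r)} = sup_{I₀∈𝓘} |I₀|^{−1/r} (∫ (Σ_{I⊆I₀} |a_I|²/|I| · 1_I)^{r/2})^{1/r}`. -/
def bmoNorm (𝓘 : Finset (ℤ × ℤ)) (a : ℤ × ℤ → ℂ) (r : ℝ) : ℝ :=
  ⨆ I₀ : {p // p ∈ 𝓘},
    dyadicLen I₀.1 ^ (-(1:ℝ)/r) *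
      (∫ x : ℝ,
        (∑ I ∈ 𝓘.filter (fun I => dyadicSet I ⊆ dyadicSet I₀.1),
          ‖a I‖ ^ 2 / dyadicLen I *
            (dyadicSet I).indicator (fun _ => (1:ℝ)) x) ^ (r/2)) ^ (1/r)

/-! Write `f_K = ∑_{I ∈ 𝓘, I ⊆ K} c_I 1_I` with `c_I = |a_I|² / |I|`, so that
`‖a‖_{BMO(r)} ≤ M` iff `⨍_K f_K^{r/2} ≤ M^r` for every `K ∈ 𝓘`. The lower bound is then
Hölder's inequality on `K`. For the upper bound, Chebyshev's inequality gives
`|{f_K > ℓ}| ≤ ε |K|` at a level `ℓ` comparable to `‖a‖²_{BMO(p)}`. Stopping at the maximal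
`J ∈ 𝓘` inside `K` whose ancestor sum `∑_{J ⊆ I ⊆ K} c_I` exceeds `ℓ`, the intervals `J` are
disjoint, cover `{f_K > ℓ}`, lie inside it, and satisfy `f_K ≤ ℓ + f_J` on `J`. This good-λ
inequality iterates to `|{f_K > kℓ}| ≤ εᵏ |K|`, and summing over the layers bounds
`⨍_K f_K^{q/2}` by a multiple of `ℓ^{q/2}`. -/

open scoped ENNReal

lemma dyadicLen_pos (P : ℤ × ℤ) : 0 < dyadicLen P := zpow_pos two_pos _

lemma measurableSet_dyadicSet (P : ℤ × ℤ) : MeasurableSet (dyadicSet P) := measurableSet_Ico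

lemma volume_dyadicSet (P : ℤ × ℤ) : volume (dyadicSet P) = ENNReal.ofReal (dyadicLen P) := by
  rw [dyadicSet, Real.volume_Ico, dyadicLen]
  ring_nf

lemma mem_dyadicSet_iff {P : ℤ × ℤ} {x : ℝ} : x ∈ dyadicSet P ↔ ⌊x / 2 ^ P.1⌋ = P.2 := by
  have h : (0 : ℝ) < 2 ^ P.1 := zpow_pos two_pos _
  rw [Int.floor_eq_iff, le_div_iff₀ h, div_lt_iff₀ h, dyadicSet, mem_Ico, mul_comm (P.2 : ℝ),
    mul_comm ((P.2 : ℝ) + 1)]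

lemma floor_div_two_zpow_congr {i j : ℤ} (hji : j ≤ i) {x y : ℝ}
    (h : ⌊x / 2 ^ j⌋ = ⌊y / 2 ^ j⌋) : ⌊x / 2 ^ i⌋ = ⌊y / 2 ^ i⌋ := by
  obtain ⟨d, rfl⟩ := Int.le.dest hji
  have h2 : (2 : ℝ) ^ (j + d) = 2 ^ j * ((2 ^ d : ℕ) : ℝ) := by
    rw [zpow_add₀ two_ne_zero, zpow_natCast, Nat.cast_pow, Nat.cast_ofNat]
  rw [h2, ← div_div, ← div_div, Int.floor_div_natCast, Int.floor_div_natCast, h]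

lemma dyadicSet_subset_of_le {P Q : ℤ × ℤ} (h : P.1 ≤ Q.1) {x : ℝ} (hP : x ∈ dyadicSet P)
    (hQ : x ∈ dyadicSet Q) : dyadicSet P ⊆ dyadicSet Q := by
  intro y hy
  rw [mem_dyadicSet_iff] at hP hQ hy ⊢
  rw [← hQ]
  exact floor_div_two_zpow_congr h (hy.trans hP.symm)

lemma dyadicSet_subset_or_subset {P Q : ℤ × ℤ} {x : ℝ} (hP : x ∈ dyadicSet P)
    (hQ : x ∈ dyadicSet Q) : dyadicSet P ⊆ dyadicSet Q ∨ dyadicSet Q ⊆ dyadicSet P :=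
  (le_total P.1 Q.1).imp (dyadicSet_subset_of_le · hP hQ) (dyadicSet_subset_of_le · hQ hP)

lemma dyadicSet_injective : Function.Injective dyadicSet := by
  intro P Q h
  have hlt : (2 : ℝ) ^ P.1 * P.2 < 2 ^ P.1 * (P.2 + 1) := by
    have := dyadicLen_pos P
    rw [dyadicLen] at this
    linarith
  obtain ⟨hl, hr⟩ := (Set.Ico_eq_Ico_iff (Or.inl hlt)).1 h
  have hscale : P.1 = Q.1 :=
    zpow_right_injective₀ two_pos (by norm_num : (2 : ℝ) ≠ 1) (by linear_combination hr - hl)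
  rw [hscale] at hl
  exact Prod.ext hscale (Int.cast_injective (mul_left_cancel₀ (zpow_pos two_pos _).ne' hl))

lemma exists_dyadicSet_subset_forall {T : Finset (ℤ × ℤ)} (hT : T.Nonempty) {x : ℝ}
    (hx : ∀ I ∈ T, x ∈ dyadicSet I) : ∃ I₀ ∈ T, ∀ I ∈ T, dyadicSet I₀ ⊆ dyadicSet I := by
  obtain ⟨I₀, hI₀, hmin⟩ := T.exists_min_image Prod.fst hT
  exact ⟨I₀, hI₀, fun I hI => dyadicSet_subset_of_le (hmin I hI) (hx I₀ hI₀) (hx I hI)⟩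

lemma exists_forall_subset_dyadicSet {T : Finset (ℤ × ℤ)} (hT : T.Nonempty) {x : ℝ}
    (hx : ∀ I ∈ T, x ∈ dyadicSet I) : ∃ I₁ ∈ T, ∀ I ∈ T, dyadicSet I ⊆ dyadicSet I₁ := by
  obtain ⟨I₁, hI₁, hmax⟩ := T.exists_max_image Prod.fst hT
  exact ⟨I₁, hI₁, fun I hI => dyadicSet_subset_of_le (hmax I hI) (hx I hI) (hx I₁ hI₁)⟩

section DyadicSum

variable (𝓘 : Finset (ℤ × ℤ)) (c : ℤ × ℤ → ℝ)

def dyadicSum (J : ℤ × ℤ) (x : ℝ) : ℝ :=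
  ∑ I ∈ 𝓘.filter (fun I => dyadicSet I ⊆ dyadicSet J),
    c I * (dyadicSet I).indicator (fun _ => (1:ℝ)) x

lemma bmoNorm_eq_iSup_dyadicSum (a : ℤ × ℤ → ℂ) (r : ℝ) :
    bmoNorm 𝓘 a r = ⨆ K : {p // p ∈ 𝓘}, dyadicLen K.1 ^ (-(1:ℝ)/r) *
      (∫ x, dyadicSum 𝓘 (fun I => ‖a I‖ ^ 2 / dyadicLen I) K.1 x ^ (r/2)) ^ (1/r) := rfl

variable {𝓘 c}

lemma dyadicSum_eq_sum_filter_mem (J : ℤ × ℤ) (x : ℝ) :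
    dyadicSum 𝓘 c J x =
      ∑ I ∈ 𝓘.filter (fun I => dyadicSet I ⊆ dyadicSet J ∧ x ∈ dyadicSet I), c I := by
  rw [← Finset.filter_filter, Finset.sum_filter, dyadicSum]
  refine Finset.sum_congr rfl fun I _ => ?_
  simp only [Set.indicator_apply, mul_ite, mul_one, mul_zero]

lemma dyadicSum_nonneg (hc : 0 ≤ c) (J : ℤ × ℤ) (x : ℝ) : 0 ≤ dyadicSum 𝓘 c J x := by
  rw [dyadicSum_eq_sum_filter_mem]
  exact Finset.sum_nonneg fun I _ => hc I

lemma dyadicSum_le_sum (hc : 0 ≤ c) (J : ℤ × ℤ) (x : ℝ) : dyadicSum 𝓘 c J x ≤ ∑ I ∈ 𝓘, c I := by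
  rw [dyadicSum_eq_sum_filter_mem]
  exact Finset.sum_le_sum_of_subset_of_nonneg (Finset.filter_subset _ _) fun I _ _ => hc I

lemma dyadicSum_eq_zero_of_notMem {J : ℤ × ℤ} {x : ℝ} (hx : x ∉ dyadicSet J) :
    dyadicSum 𝓘 c J x = 0 := by
  rw [dyadicSum_eq_sum_filter_mem]
  refine Finset.sum_eq_zero fun I hI => absurd ?_ hx
  obtain ⟨-, hIJ, hxI⟩ := Finset.mem_filter.1 hI
  exact hIJ hxI

lemma measurable_dyadicSum (J : ℤ × ℤ) : Measurable (dyadicSum 𝓘 c J) :=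
  Finset.measurable_sum _ fun I _ =>
    (measurable_const.indicator (measurableSet_dyadicSet I)).const_mul _

end DyadicSum

section StoppingTime

variable {𝓘 : Finset (ℤ × ℤ)} {c : ℤ × ℤ → ℝ} {K J : ℤ × ℤ} {ℓ : ℝ} {x : ℝ}

variable (𝓘 c) in
def ancestorSum (K J : ℤ × ℤ) : ℝ :=
  ∑ I ∈ 𝓘.filter (fun I => dyadicSet J ⊆ dyadicSet I ∧ dyadicSet I ⊆ dyadicSet K), c I

variable (𝓘 c) in
def highIntervals (K : ℤ × ℤ) (ℓ : ℝ) : Finset (ℤ × ℤ) :=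
  𝓘.filter (fun J => dyadicSet J ⊆ dyadicSet K ∧ ℓ < ancestorSum 𝓘 c K J)

variable (𝓘 c) in
def stoppingIntervals (K : ℤ × ℤ) (ℓ : ℝ) : Finset (ℤ × ℤ) :=
  (highIntervals 𝓘 c K ℓ).filter
    (fun J => ∀ I ∈ highIntervals 𝓘 c K ℓ, dyadicSet J ⊆ dyadicSet I → I = J)

lemma stoppingIntervals_subset : stoppingIntervals 𝓘 c K ℓ ⊆ 𝓘 :=
  (Finset.filter_subset _ _).trans (Finset.filter_subset _ _)

lemma sum_le_ancestorSum (hc : 0 ≤ c) {T : Finset (ℤ × ℤ)}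
    (hT : T ⊆ 𝓘.filter (fun I => dyadicSet I ⊆ dyadicSet K))
    (hJ : ∀ I ∈ T, dyadicSet J ⊆ dyadicSet I) : ∑ I ∈ T, c I ≤ ancestorSum 𝓘 c K J := by
  refine Finset.sum_le_sum_of_subset_of_nonneg (fun I hI => ?_) fun I _ _ => hc I
  obtain ⟨hI𝓘, hIK⟩ := Finset.mem_filter.1 (hT hI)
  exact Finset.mem_filter.2 ⟨hI𝓘, hJ I hI, hIK⟩

lemma ancestorSum_le_dyadicSum (hc : 0 ≤ c) (hx : x ∈ dyadicSet J) :
    ancestorSum 𝓘 c K J ≤ dyadicSum 𝓘 c K x := by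
  rw [dyadicSum_eq_sum_filter_mem]
  refine Finset.sum_le_sum_of_subset_of_nonneg (fun I hI => ?_) fun I _ _ => hc I
  obtain ⟨hI𝓘, hJI, hIK⟩ := Finset.mem_filter.1 hI
  exact Finset.mem_filter.2 ⟨hI𝓘, hIK, hJI hx⟩

lemma lt_dyadicSum_of_mem_stoppingIntervals (hc : 0 ≤ c) (hJ : J ∈ stoppingIntervals 𝓘 c K ℓ)
    (hx : x ∈ dyadicSet J) : ℓ < dyadicSum 𝓘 c K x :=
  (Finset.mem_filter.1 (Finset.mem_filter.1 hJ).1).2.2.trans_le (ancestorSum_le_dyadicSum hc hx)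

lemma pairwiseDisjoint_stoppingIntervals :
    (stoppingIntervals 𝓘 c K ℓ : Set (ℤ × ℤ)).PairwiseDisjoint dyadicSet := by
  intro J₁ h₁ J₂ h₂ hne
  obtain ⟨hJ₁, hmax₁⟩ := Finset.mem_filter.1 h₁
  obtain ⟨hJ₂, hmax₂⟩ := Finset.mem_filter.1 h₂
  refine Set.disjoint_left.2 fun x hx₁ hx₂ => ?_
  rcases dyadicSet_subset_or_subset hx₁ hx₂ with h | h
  · exact hne (hmax₁ J₂ hJ₂ h).symm
  · exact hne (hmax₂ J₁ hJ₁ h)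

lemma dyadicSum_le_add_of_mem_stoppingIntervals (hc : 0 ≤ c) (hℓ : 0 ≤ ℓ)
    (hJ : J ∈ stoppingIntervals 𝓘 c K ℓ) (hx : x ∈ dyadicSet J) :
    dyadicSum 𝓘 c K x ≤ ℓ + dyadicSum 𝓘 c J x := by
  obtain ⟨hJhigh, hmax⟩ := Finset.mem_filter.1 hJ
  have hJK : dyadicSet J ⊆ dyadicSet K := (Finset.mem_filter.1 hJhigh).2.1
  set C := 𝓘.filter (fun I => dyadicSet I ⊆ dyadicSet K ∧ x ∈ dyadicSet I)
  set R := C.filter (fun I => ¬ dyadicSet I ⊆ dyadicSet J)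
  have hinner : C.filter (fun I => dyadicSet I ⊆ dyadicSet J) =
      𝓘.filter (fun I => dyadicSet I ⊆ dyadicSet J ∧ x ∈ dyadicSet I) := by
    ext I
    simp only [C, Finset.mem_filter]
    exact ⟨fun h => ⟨h.1.1, h.2, h.1.2.2⟩, fun h => ⟨⟨h.1, h.2.1.trans hJK, h.2.2⟩, h.2.1⟩⟩
  -- the intervals of `C` not inside `J` contain `J`, so the smallest of them is not high
  -- by maximality of `J`
  have houter : ∑ I ∈ R, c I ≤ ℓ := by
    rcases R.eq_empty_or_nonempty with hR | hR
    · rw [hR, Finset.sum_empty]; exact hℓ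
    have hRx : ∀ I ∈ R, x ∈ dyadicSet I := fun I hI =>
      (Finset.mem_filter.1 (Finset.mem_filter.1 hI).1).2.2
    obtain ⟨I₀, hI₀, hI₀min⟩ := exists_dyadicSet_subset_forall hR hRx
    obtain ⟨hI₀C, hI₀J⟩ := Finset.mem_filter.1 hI₀
    obtain ⟨hI₀𝓘, hI₀K, hxI₀⟩ := Finset.mem_filter.1 hI₀C
    have hRC : R ⊆ 𝓘.filter (fun I => dyadicSet I ⊆ dyadicSet K) := fun I hI =>
      Finset.mem_filter.2 ⟨(Finset.mem_filter.1 (Finset.mem_filter.1 hI).1).1,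
        (Finset.mem_filter.1 (Finset.mem_filter.1 hI).1).2.1⟩
    refine (sum_le_ancestorSum hc hRC hI₀min).trans (not_lt.1 fun hlt => hI₀J ?_)
    have hJI₀ : dyadicSet J ⊆ dyadicSet I₀ :=
      (dyadicSet_subset_or_subset hx hxI₀).resolve_right hI₀J
    rw [hmax I₀ (Finset.mem_filter.2 ⟨hI₀𝓘, hI₀K, hlt⟩) hJI₀]
  rw [dyadicSum_eq_sum_filter_mem, dyadicSum_eq_sum_filter_mem, ← hinner,
    ← Finset.sum_filter_add_sum_filter_not C (fun I => dyadicSet I ⊆ dyadicSet J), add_comm]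
  exact add_le_add_left houter _

lemma exists_mem_stoppingIntervals (hc : 0 ≤ c) (hℓ : 0 ≤ ℓ) (hx : ℓ < dyadicSum 𝓘 c K x) :
    ∃ J ∈ stoppingIntervals 𝓘 c K ℓ, x ∈ dyadicSet J := by
  rw [dyadicSum_eq_sum_filter_mem] at hx
  set C := 𝓘.filter (fun I => dyadicSet I ⊆ dyadicSet K ∧ x ∈ dyadicSet I)
  have hC : C.Nonempty := by
    by_contra h
    rw [Finset.not_nonempty_iff_eq_empty.1 h, Finset.sum_empty] at hx
    exact hx.not_ge hℓ
  obtain ⟨I₀, hI₀, hI₀min⟩ :=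
    exists_dyadicSet_subset_forall hC fun I hI => (Finset.mem_filter.1 hI).2.2
  obtain ⟨hI₀𝓘, hI₀K, hxI₀⟩ := Finset.mem_filter.1 hI₀
  set A := (highIntervals 𝓘 c K ℓ).filter (fun I => x ∈ dyadicSet I)
  have hI₀A : I₀ ∈ A := by
    refine Finset.mem_filter.2 ⟨Finset.mem_filter.2 ⟨hI₀𝓘, hI₀K, hx.trans_le ?_⟩, hxI₀⟩
    exact sum_le_ancestorSum hc (Finset.monotone_filter_right 𝓘 fun _ _ h => h.1) hI₀min
  obtain ⟨J, hJA, hJmax⟩ :=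
    exists_forall_subset_dyadicSet ⟨I₀, hI₀A⟩ fun I hI => (Finset.mem_filter.1 hI).2
  obtain ⟨hJhigh, hxJ⟩ := Finset.mem_filter.1 hJA
  refine ⟨J, Finset.mem_filter.2 ⟨hJhigh, fun I hI hJI => dyadicSet_injective ?_⟩, hxJ⟩
  exact (hJmax I (Finset.mem_filter.2 ⟨hI, hJI hxJ⟩)).antisymm hJI

end StoppingTime

lemma volume_lt_dyadicSum_le_pow {𝓘 : Finset (ℤ × ℤ)} {c : ℤ × ℤ → ℝ} (hc : 0 ≤ c) {ℓ : ℝ}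
    (hℓ : 0 ≤ ℓ) {ε : ℝ≥0∞}
    (h : ∀ K ∈ 𝓘, volume {x | ℓ < dyadicSum 𝓘 c K x} ≤ ε * volume (dyadicSet K)) (k : ℕ) :
    ∀ K ∈ 𝓘, volume {x | k * ℓ < dyadicSum 𝓘 c K x} ≤ ε ^ k * volume (dyadicSet K) := by
  induction k with
  | zero =>
    intro K _
    rw [pow_zero, one_mul]
    refine measure_mono fun x hx => ?_
    by_contra hxK
    simp [dyadicSum_eq_zero_of_notMem hxK] at hx
  | succ k ih =>
    intro K hK
    set 𝒮 := stoppingIntervals 𝓘 c K ℓ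
    have hcover : {x | ((k + 1 : ℕ) : ℝ) * ℓ < dyadicSum 𝓘 c K x} ⊆
        ⋃ J ∈ 𝒮, {x | k * ℓ < dyadicSum 𝓘 c J x} := by
      intro x hx
      have hx : (k : ℝ) * ℓ + ℓ < dyadicSum 𝓘 c K x := by simpa [add_mul] using hx
      obtain ⟨J, hJ, hxJ⟩ := exists_mem_stoppingIntervals hc hℓ
        ((le_add_of_nonneg_left (by positivity)).trans_lt hx)
      have := dyadicSum_le_add_of_mem_stoppingIntervals hc hℓ hJ hxJ
      exact Set.mem_biUnion hJ (show (k : ℝ) * ℓ < dyadicSum 𝓘 c J x by linarith)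
    have hunion : (⋃ J ∈ 𝒮, dyadicSet J) ⊆ {x | ℓ < dyadicSum 𝓘 c K x} := by
      simp only [Set.iUnion_subset_iff]
      exact fun J hJ x hx => lt_dyadicSum_of_mem_stoppingIntervals hc hJ hx
    calc volume {x | ((k + 1 : ℕ) : ℝ) * ℓ < dyadicSum 𝓘 c K x}
        ≤ ∑ J ∈ 𝒮, volume {x | k * ℓ < dyadicSum 𝓘 c J x} :=
          (measure_mono hcover).trans (measure_biUnion_finset_le _ _)
      _ ≤ ∑ J ∈ 𝒮, ε ^ k * volume (dyadicSet J) :=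
          Finset.sum_le_sum fun J hJ => ih J (stoppingIntervals_subset hJ)
      _ = ε ^ k * volume (⋃ J ∈ 𝒮, dyadicSet J) := by
          rw [← Finset.mul_sum, measure_biUnion_finset pairwiseDisjoint_stoppingIntervals
            fun J _ => measurableSet_dyadicSet J]
      _ ≤ ε ^ k * (ε * volume (dyadicSet K)) := by
          gcongr
          exact (measure_mono hunion).trans (h K hK)
      _ = ε ^ (k + 1) * volume (dyadicSet K) := by ring

lemma exists_nat_mul_lt_le {a ℓ : ℝ} (ha : 0 < a) (hℓ : 0 < ℓ) :
    ∃ k : ℕ, k * ℓ < a ∧ a ≤ (k + 1) * ℓ := by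
  have hn : 0 < ⌈a / ℓ⌉₊ := Nat.ceil_pos.2 (div_pos ha hℓ)
  refine ⟨⌈a / ℓ⌉₊ - 1, ?_, ?_⟩
  · rw [Nat.cast_pred hn, ← lt_div_iff₀ hℓ]
    linarith [Nat.ceil_lt_add_one (div_pos ha hℓ).le]
  · rw [Nat.cast_pred hn, sub_add_cancel, ← div_le_iff₀ hℓ]
    exact Nat.le_ceil _

lemma lintegral_ofReal_rpow_le_tsum {α : Type*} [MeasurableSpace α] (μ : Measure α) {f : α → ℝ}
    (hf : Measurable f) {ℓ t : ℝ} (hℓ : 0 < ℓ) (ht : 0 < t) :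
    ∫⁻ x, ENNReal.ofReal (f x) ^ t ∂μ ≤
      ∑' k : ℕ, ENNReal.ofReal ((k + 1) * ℓ) ^ t * μ {x | k * ℓ < f x} := by
  have hmeas (k : ℕ) : MeasurableSet {x | k * ℓ < f x} := measurableSet_lt measurable_const hf
  have hpt (x : α) : ENNReal.ofReal (f x) ^ t ≤
      ∑' k : ℕ, {x | k * ℓ < f x}.indicator (fun _ => ENNReal.ofReal ((k + 1) * ℓ) ^ t) x := by
    rcases le_or_gt (f x) 0 with h | h
    · rw [ENNReal.ofReal_of_nonpos h, ENNReal.zero_rpow_of_pos ht]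
      exact zero_le
    obtain ⟨k, hk, hk'⟩ := exists_nat_mul_lt_le h hℓ
    refine le_trans ?_ (ENNReal.le_tsum k)
    rw [Set.indicator_of_mem (show x ∈ {x | k * ℓ < f x} from hk)]
    gcongr
  calc ∫⁻ x, ENNReal.ofReal (f x) ^ t ∂μ
      ≤ ∫⁻ x, ∑' k : ℕ, {x | k * ℓ < f x}.indicator
          (fun _ => ENNReal.ofReal ((k + 1) * ℓ) ^ t) x ∂μ := lintegral_mono hpt
    _ = ∑' k : ℕ, ENNReal.ofReal ((k + 1) * ℓ) ^ t * μ {x | k * ℓ < f x} := by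
      rw [lintegral_tsum fun k => (measurable_const.indicator (hmeas k)).aemeasurable]
      simp_rw [lintegral_indicator_const (hmeas _)]

lemma lintegral_ofReal_rpow_le_of_meas_lt_le {α : Type*} [MeasurableSpace α] {μ : Measure α}
    {f : α → ℝ} (hf : Measurable f) {ℓ t : ℝ} (hℓ : 0 < ℓ) (ht : 0 < t) {ε U : ℝ≥0∞}
    (hε : 2 ^ t * ε ≤ 2⁻¹) (h : ∀ k : ℕ, μ {x | k * ℓ < f x} ≤ ε ^ k * U) :
    ∫⁻ x, ENNReal.ofReal (f x) ^ t ∂μ ≤ 2 * ENNReal.ofReal ℓ ^ t * U := by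
  have hterm (k : ℕ) : ENNReal.ofReal ((k + 1) * ℓ) ^ t ≤ (2 ^ t) ^ k * ENNReal.ofReal ℓ ^ t := by
    have hk : ENNReal.ofReal ((k + 1 : ℝ)) ≤ 2 ^ k := by
      rw [← Nat.cast_succ, ENNReal.ofReal_natCast]
      exact_mod_cast Nat.lt_two_pow_self
    rw [ENNReal.ofReal_mul (by positivity), ENNReal.mul_rpow_of_nonneg _ _ ht.le]
    gcongr
    calc ENNReal.ofReal (k + 1) ^ t ≤ ((2 : ℝ≥0∞) ^ k) ^ t := ENNReal.rpow_le_rpow hk ht.le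
      _ = (2 ^ t) ^ k := by
        rw [← ENNReal.rpow_natCast, ← ENNReal.rpow_natCast, ← ENNReal.rpow_mul,
          ← ENNReal.rpow_mul, mul_comm]
  calc ∫⁻ x, ENNReal.ofReal (f x) ^ t ∂μ
      ≤ ∑' k : ℕ, ENNReal.ofReal ((k + 1) * ℓ) ^ t * μ {x | k * ℓ < f x} :=
        lintegral_ofReal_rpow_le_tsum μ hf hℓ ht
    _ ≤ ∑' k : ℕ, ENNReal.ofReal ℓ ^ t * U * 2⁻¹ ^ k := by
        refine ENNReal.tsum_le_tsum fun k => ?_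
        calc ENNReal.ofReal ((k + 1) * ℓ) ^ t * μ {x | k * ℓ < f x}
            ≤ (2 ^ t) ^ k * ENNReal.ofReal ℓ ^ t * (ε ^ k * U) := by gcongr; exacts [hterm k, h k]
          _ = ENNReal.ofReal ℓ ^ t * U * (2 ^ t * ε) ^ k := by ring
          _ ≤ ENNReal.ofReal ℓ ^ t * U * 2⁻¹ ^ k := by gcongr
    _ = 2 * ENNReal.ofReal ℓ ^ t * U := by
        rw [ENNReal.tsum_mul_left, ENNReal.tsum_geometric, ENNReal.one_sub_inv_two, inv_inv]
        ring

lemma lintegral_rpow_le_of_lintegral_rpow_le {α : Type*} [MeasurableSpace α] {μ : Measure α}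
    {g : α → ℝ≥0∞} (hg : AEMeasurable g μ) {s t : ℝ} (hs : 0 < s) (hst : s ≤ t) {Λ : ℝ≥0∞}
    (h : ∫⁻ x, g x ^ t ∂μ ≤ Λ ^ t * μ univ) : ∫⁻ x, g x ^ s ∂μ ≤ Λ ^ s * μ univ := by
  have ht : 0 < t := hs.trans_le hst
  have hholder := eLpNorm'_le_eLpNorm'_mul_rpow_measure_univ hs hst hg.aestronglyMeasurable
  simp only [eLpNorm'_eq_lintegral_enorm, enorm_eq_self] at hholder
  rw [← ENNReal.rpow_le_rpow_iff (one_div_pos.2 hs), ENNReal.mul_rpow_of_nonneg _ _ (by positivity),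
    ← ENNReal.rpow_mul, mul_one_div_cancel hs.ne', ENNReal.rpow_one]
  calc (∫⁻ x, g x ^ s ∂μ) ^ (1 / s)
      ≤ (∫⁻ x, g x ^ t ∂μ) ^ (1 / t) * μ univ ^ (1 / s - 1 / t) := hholder
    _ ≤ (Λ ^ t * μ univ) ^ (1 / t) * μ univ ^ (1 / s - 1 / t) := by gcongr
    _ = Λ * μ univ ^ (1 / s) := by
        rw [ENNReal.mul_rpow_of_nonneg _ _ (by positivity), ← ENNReal.rpow_mul,
          mul_one_div_cancel ht.ne', ENNReal.rpow_one, mul_assoc,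
          ← ENNReal.rpow_add_of_nonneg _ _ (by positivity)
            (sub_nonneg.2 (one_div_le_one_div_of_le hs hst)), add_sub_cancel]

lemma rpow_neg_one_div_mul_rpow_one_div_le_iff {L Y M r : ℝ} (hL : 0 < L) (hY : 0 ≤ Y)
    (hM : 0 ≤ M) (hr : 0 < r) : L ^ (-(1:ℝ)/r) * Y ^ (1/r) ≤ M ↔ Y ≤ M ^ r * L := by
  have h : L ^ (-(1:ℝ)/r) * Y ^ (1/r) = (Y / L) ^ r⁻¹ := by
    rw [Real.div_rpow hY hL.le, neg_div, Real.rpow_neg hL.le, one_div, div_eq_mul_inv, mul_comm]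
  rw [h, Real.rpow_inv_le_iff_of_pos (div_nonneg hY hL.le) hM hr, div_le_iff₀ hL]

lemma ofReal_two_rpow_div_rpow (u : ℝ) {s : ℝ} (hs : s ≠ 0) :
    ENNReal.ofReal (2 ^ (u / s)) ^ s = 2 ^ u := by
  rw [ENNReal.ofReal_rpow_of_pos (by positivity), ← Real.rpow_mul zero_le_two,
    div_mul_cancel₀ u hs, ← ENNReal.ofReal_rpow_of_pos two_pos, ENNReal.ofReal_ofNat]

section Bound

variable {𝓘 : Finset (ℤ × ℤ)} {c : ℤ × ℤ → ℝ} {s t Λ : ℝ}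

variable (𝓘 c) in
def DyadicSumBound (s Λ : ℝ) : Prop :=
  ∀ K ∈ 𝓘, ∫⁻ x, ENNReal.ofReal (dyadicSum 𝓘 c K x) ^ s ≤
    ENNReal.ofReal Λ ^ s * volume (dyadicSet K)

lemma lintegral_dyadicSum_rpow_ne_top (hc : 0 ≤ c) (hs : 0 < s) (K : ℤ × ℤ) :
    ∫⁻ x, ENNReal.ofReal (dyadicSum 𝓘 c K x) ^ s ≠ ⊤ := by
  refine ne_top_of_le_ne_top (b := ∫⁻ x, (dyadicSet K).indicator
    (fun _ => ENNReal.ofReal (∑ I ∈ 𝓘, c I) ^ s) x) ?_ (lintegral_mono fun x => ?_)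
  · rw [lintegral_indicator_const (measurableSet_dyadicSet K), volume_dyadicSet]
    exact ENNReal.mul_ne_top (ENNReal.rpow_ne_top_of_nonneg hs.le ENNReal.ofReal_ne_top)
      ENNReal.ofReal_ne_top
  by_cases hx : x ∈ dyadicSet K
  · rw [Set.indicator_of_mem hx]
    gcongr
    exact dyadicSum_le_sum hc K x
  · rw [dyadicSum_eq_zero_of_notMem hx, ENNReal.ofReal_zero, ENNReal.zero_rpow_of_pos hs]
    exact zero_le

lemma integral_dyadicSum_rpow (hc : 0 ≤ c) (hs : 0 ≤ s) (K : ℤ × ℤ) :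
    ∫ x, dyadicSum 𝓘 c K x ^ s = (∫⁻ x, ENNReal.ofReal (dyadicSum 𝓘 c K x) ^ s).toReal := by
  rw [integral_eq_lintegral_of_nonneg_ae
    (ae_of_all _ fun x => Real.rpow_nonneg (dyadicSum_nonneg hc K x) s)
    ((measurable_dyadicSum K).pow_const s).aestronglyMeasurable]
  simp_rw [ENNReal.ofReal_rpow_of_nonneg (dyadicSum_nonneg hc _ _) hs]

lemma coeff_nonneg (a : ℤ × ℤ → ℂ) : (0 : ℤ × ℤ → ℝ) ≤ fun I => ‖a I‖ ^ 2 / dyadicLen I :=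
  fun I => div_nonneg (sq_nonneg _) (dyadicLen_pos I).le

lemma bmoNorm_le_iff (a : ℤ × ℤ → ℂ) {r M : ℝ} (hr : 0 < r) (hM : 0 ≤ M) :
    bmoNorm 𝓘 a r ≤ M ↔ DyadicSumBound 𝓘 (fun I => ‖a I‖ ^ 2 / dyadicLen I) (r / 2) (M ^ 2) := by
  have hc := coeff_nonneg a
  have hterm (K : ℤ × ℤ) : dyadicLen K ^ (-(1:ℝ)/r) *
      (∫ x, dyadicSum 𝓘 (fun I => ‖a I‖ ^ 2 / dyadicLen I) K x ^ (r/2)) ^ (1/r) ≤ M ↔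
      ∫⁻ x, ENNReal.ofReal (dyadicSum 𝓘 (fun I => ‖a I‖ ^ 2 / dyadicLen I) K x) ^ (r / 2) ≤
        ENNReal.ofReal (M ^ 2) ^ (r / 2) * volume (dyadicSet K) := by
    rw [rpow_neg_one_div_mul_rpow_one_div_le_iff (dyadicLen_pos K) (integral_nonneg fun x =>
        Real.rpow_nonneg (dyadicSum_nonneg hc K x) _) hM hr,
      integral_dyadicSum_rpow hc (by positivity), ENNReal.ofReal_rpow_of_nonneg (by positivity)
        (by positivity), ← Real.rpow_natCast, ← Real.rpow_mul hM, volume_dyadicSet,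
      ← ENNReal.ofReal_mul (by positivity), ENNReal.le_ofReal_iff_toReal_le
        (lintegral_dyadicSum_rpow_ne_top hc (by positivity) K)
        (mul_nonneg (by positivity) (dyadicLen_pos K).le), Nat.cast_ofNat,
      mul_div_cancel₀ r two_ne_zero]
  rw [bmoNorm_eq_iSup_dyadicSum]
  constructor
  · intro h K hK
    exact (hterm K).1 ((le_ciSup (Set.finite_range _).bddAbove ⟨K, hK⟩).trans h)
  · exact fun h => Real.iSup_le (fun K => (hterm K.1).2 (h K.1 K.2)) hM

lemma bmoNorm_nonneg (𝓘 : Finset (ℤ × ℤ)) (a : ℤ × ℤ → ℂ) (r : ℝ) : 0 ≤ bmoNorm 𝓘 a r := by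
  rw [bmoNorm_eq_iSup_dyadicSum]
  exact Real.iSup_nonneg fun K => mul_nonneg (Real.rpow_nonneg (dyadicLen_pos K.1).le _)
    (Real.rpow_nonneg (integral_nonneg fun x =>
      Real.rpow_nonneg (dyadicSum_nonneg (coeff_nonneg a) K.1 x) _) _)

lemma DyadicSumBound.of_exponent_le (h : DyadicSumBound 𝓘 c t Λ) (hs : 0 < s) (hst : s ≤ t) :
    DyadicSumBound 𝓘 c s Λ := by
  intro K hK
  have hsupp (r : ℝ) (hr : 0 < r) : ∫⁻ x in dyadicSet K, ENNReal.ofReal (dyadicSum 𝓘 c K x) ^ r =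
      ∫⁻ x, ENNReal.ofReal (dyadicSum 𝓘 c K x) ^ r := by
    refine setLIntegral_eq_of_support_subset fun x hx => ?_
    by_contra hxK
    simp [dyadicSum_eq_zero_of_notMem hxK, ENNReal.zero_rpow_of_pos hr] at hx
  have hμ : volume (dyadicSet K) = volume.restrict (dyadicSet K) univ := by
    rw [Measure.restrict_apply_univ]
  rw [← hsupp s hs, hμ]
  refine lintegral_rpow_le_of_lintegral_rpow_le (measurable_dyadicSum K).ennreal_ofReal.aemeasurable
    hs hst ?_
  rw [hsupp t (hs.trans_le hst), ← hμ]
  exact h K hK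

lemma DyadicSumBound.volume_lt_le (h : DyadicSumBound 𝓘 c s Λ) (hs : 0 < s) (hΛ : 0 < Λ)
    (u : ℝ) {K : ℤ × ℤ} (hK : K ∈ 𝓘) :
    volume {x | 2 ^ (u / s) * Λ < dyadicSum 𝓘 c K x} ≤ (2 ^ u)⁻¹ * volume (dyadicSet K) := by
  set ℓ := 2 ^ (u / s) * Λ
  have hℓ : ENNReal.ofReal ℓ ^ s = 2 ^ u * ENNReal.ofReal Λ ^ s := by
    rw [ENNReal.ofReal_mul (by positivity), ENNReal.mul_rpow_of_nonneg _ _ hs.le,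
      ofReal_two_rpow_div_rpow u hs.ne']
  have hΛs : ENNReal.ofReal Λ ^ s ≠ 0 := (ENNReal.rpow_pos (ENNReal.ofReal_pos.2 hΛ)
    ENNReal.ofReal_ne_top).ne'
  calc volume {x | ℓ < dyadicSum 𝓘 c K x}
      ≤ volume {x | ENNReal.ofReal ℓ ^ s ≤ ENNReal.ofReal (dyadicSum 𝓘 c K x) ^ s} :=
        measure_mono fun x hx => ENNReal.rpow_le_rpow (ENNReal.ofReal_le_ofReal hx.le) hs.le
    _ ≤ (∫⁻ x, ENNReal.ofReal (dyadicSum 𝓘 c K x) ^ s) / ENNReal.ofReal ℓ ^ s :=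
        meas_ge_le_lintegral_div ((measurable_dyadicSum K).ennreal_ofReal.pow_const s).aemeasurable
          (by rw [hℓ]; exact mul_ne_zero (by positivity) hΛs)
          (ENNReal.rpow_ne_top_of_nonneg hs.le ENNReal.ofReal_ne_top)
    _ ≤ ENNReal.ofReal Λ ^ s * volume (dyadicSet K) / (2 ^ u * ENNReal.ofReal Λ ^ s) := by
        rw [hℓ]; gcongr; exact h K hK
    _ = (2 ^ u)⁻¹ * volume (dyadicSet K) := by
        rw [mul_comm (ENNReal.ofReal Λ ^ s), ENNReal.mul_div_mul_right _ _ hΛs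
          (ENNReal.rpow_ne_top_of_nonneg hs.le ENNReal.ofReal_ne_top), ENNReal.div_eq_inv_mul]

theorem DyadicSumBound.johnNirenberg (h : DyadicSumBound 𝓘 c s Λ) (hc : 0 ≤ c) (hs : 0 < s)
    (ht : 0 < t) (hΛ : 0 < Λ) : DyadicSumBound 𝓘 c t (2 ^ (1 / t + (t + 1) / s) * Λ) := by
  -- Chebyshev at level `ℓ` gives the ratio `ε = 2^{-(t+1)}`, which beats the growth
  -- `(k + 1)^t ≤ 2^{tk}` of the `t`-th power over the layers `kℓ < f ≤ (k + 1)ℓ`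
  set ℓ := 2 ^ ((t + 1) / s) * Λ
  have hℓ : 0 < ℓ := by positivity
  have hε : (2 : ℝ≥0∞) ^ t * (2 ^ (t + 1))⁻¹ ≤ 2⁻¹ := by
    rw [ENNReal.rpow_add _ _ two_ne_zero ENNReal.ofNat_ne_top, ENNReal.rpow_one,
      ENNReal.mul_inv (by simp) (by simp), ← mul_assoc,
      ENNReal.mul_inv_cancel (by positivity) (by simp), one_mul]
  intro K hK
  calc ∫⁻ x, ENNReal.ofReal (dyadicSum 𝓘 c K x) ^ t
      ≤ 2 * ENNReal.ofReal ℓ ^ t * volume (dyadicSet K) :=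
        lintegral_ofReal_rpow_le_of_meas_lt_le (measurable_dyadicSum K) hℓ ht hε fun k =>
          volume_lt_dyadicSum_le_pow hc hℓ.le (fun K hK => h.volume_lt_le hs hΛ (t + 1) hK) k K hK
    _ = ENNReal.ofReal (2 ^ (1 / t + (t + 1) / s) * Λ) ^ t * volume (dyadicSet K) := by
        rw [Real.rpow_add two_pos, mul_assoc (2 ^ (1 / t) : ℝ),
          ENNReal.ofReal_mul (by positivity : (0 : ℝ) ≤ 2 ^ (1 / t)),
          ENNReal.mul_rpow_of_nonneg (ENNReal.ofReal (2 ^ (1 / t))) _ ht.le,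
          ofReal_two_rpow_div_rpow 1 ht.ne', ENNReal.rpow_one]

end Bound

lemma bmoNorm_le_bmoNorm_of_le (𝓘 : Finset (ℤ × ℤ)) (a : ℤ × ℤ → ℂ) {p q : ℝ} (hp : 0 < p)
    (hpq : p ≤ q) : bmoNorm 𝓘 a p ≤ bmoNorm 𝓘 a q := by
  have hq : 0 < q := hp.trans_le hpq
  rw [bmoNorm_le_iff a hp (bmoNorm_nonneg 𝓘 a q)]
  exact ((bmoNorm_le_iff a hq (bmoNorm_nonneg 𝓘 a q)).1 le_rfl).of_exponent_le (by positivity)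
    (by linarith)

lemma bmoNorm_le_two_rpow_mul_bmoNorm (𝓘 : Finset (ℤ × ℤ)) (a : ℤ × ℤ → ℂ) {p q : ℝ}
    (hp : 0 < p) (hq : 0 < q) :
    bmoNorm 𝓘 a q ≤ 2 ^ (1 / q + (q + 2) / (2 * p)) * bmoNorm 𝓘 a p := by
  set C : ℝ := 2 ^ (1 / q + (q + 2) / (2 * p))
  have hC : 0 < C := by positivity
  have hC2 : C ^ 2 = 2 ^ (1 / (q / 2) + (q / 2 + 1) / (p / 2)) := by
    rw [← Real.rpow_natCast, ← Real.rpow_mul zero_le_two]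
    congr 1
    field_simp
    ring
  -- Chebyshev needs a positive level, so compare with every `b / C > bmoNorm 𝓘 a p`
  refine le_of_forall_gt_imp_ge_of_dense fun b hb => ?_
  have hM : bmoNorm 𝓘 a p < b / C := (lt_div_iff₀' hC).2 hb
  have hM0 : 0 < b / C := (bmoNorm_nonneg 𝓘 a p).trans_lt hM
  have hq' := ((bmoNorm_le_iff a hp hM0.le).1 hM.le).johnNirenberg (t := q / 2) (coeff_nonneg a)
    (by positivity) (by positivity) (by positivity)
  rw [← hC2, ← mul_pow] at hq'
  calc bmoNorm 𝓘 a q ≤ C * (b / C) := (bmoNorm_le_iff a hq (by positivity)).2 hq'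
    _ = b := mul_div_cancel₀ b hC.ne'

/-- John–Nirenberg for phase-space BMO: for 0 < p < q < ∞ the BMO(p) and BMO(q) norms are
comparable, with constants depending only on p and q. -/
theorem statement3 (p q : ℝ) (hp : 0 < p) (hpq : p < q) :
    ∃ c C : ℝ, 0 < c ∧ c ≤ C ∧
      ∀ (𝓘 : Finset (ℤ × ℤ)) (a : ℤ × ℤ → ℂ),
        c * bmoNorm 𝓘 a p ≤ bmoNorm 𝓘 a q ∧ bmoNorm 𝓘 a q ≤ C * bmoNorm 𝓘 a p := by
  have hq : 0 < q := hp.trans hpq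
  refine ⟨1, 2 ^ (1 / q + (q + 2) / (2 * p)), one_pos,
    Real.one_le_rpow one_le_two (by positivity), fun 𝓘 a => ⟨?_, ?_⟩⟩
  · rw [one_mul]
    exact bmoNorm_le_bmoNorm_of_le 𝓘 a hp hpq.le
  · exact bmoNorm_le_two_rpow_mul_bmoNorm 𝓘 a hp hq
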